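/- arXiv:2408.15904 — 6 statements merged into one kernel-verified Lean document; each statement's English description precedes it below -/
import Mathlib

section
/- Let κ > 0, R ≥ 0 and let b : ℝ^d → ℝ^d satisfy ⟨b(x) − b(y), x − y⟩ ≤ −κ|x − y|² whenever |x| ≥ R and |y| ≥ R. Let f : [0,1] → ℝ^d be continuous and let u, v : [0,1] → ℝ^d be differentiable functions satisfying u'(t) − v'(t) = f(t) + b(u(t)) − b(v(t)) for every t ∈ [0,1]. Fix 0 ≤ t₁ ≤ t₂ ≤ 1 and assume |u(t)| ≥ R and |v(t)| ≥ R for all t ∈ [t₁, t₂]. Then for every ε > 0, |u(t₂) − v(t₂)|² ≤ |u(t₁) − v(t₁)|² e^{(ε−2κ)(t₂−t₁)} + ε^{−1} ∫_{t₁}^{t₂} e^{(ε−2κ)(t₂−s)} |f(s)|² ds. -/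
open MeasureTheory Set
open scoped RealInnerProductSpace

/-!
Along the two paths, `φ(t) = ‖u t - v t‖²` has derivative `2⟪f + b u - b v, u - v⟫`.
In the contractive region the drift part is at most `-2κ φ`, and Young's inequality bounds the
forcing part by `ε φ + ε⁻¹ ‖f‖²`, so `φ' ≤ (ε - 2κ) φ + ε⁻¹ ‖f‖²`. The linear Gronwall
inequality with a forcing term then gives the estimate.
-/

theorem le_exp_mul_add_integral_of_hasDerivAt_le {φ φ' g : ℝ → ℝ} {α a b : ℝ} (hab : a ≤ b)
    (hφ : ContinuousOn φ (Icc a b)) (hg : ContinuousOn g (Icc a b))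
    (hφ' : ∀ t ∈ Ioo a b, HasDerivAt φ (φ' t) t)
    (hle : ∀ t ∈ Ioo a b, φ' t ≤ α * φ t + g t) :
    φ b ≤ φ a * Real.exp (α * (b - a)) + ∫ s in a..b, Real.exp (α * (b - s)) * g s := by
  set w : ℝ → ℝ := fun s => Real.exp (α * (b - s)) * g s
  have hw : ContinuousOn w (Icc a b) :=
    (by fun_prop : Continuous fun s => Real.exp (α * (b - s))).continuousOn.mul hg
  -- `ψ` is `φ` with the integrating factor applied and the forcing integrated out.
  set ψ : ℝ → ℝ := fun t => φ t * Real.exp (α * (b - t)) - ∫ s in a..t, w s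
  have hψ_cont : ContinuousOn ψ (Icc a b) := by
    refine (hφ.mul (by fun_prop)).sub ?_
    have hw_int : IntegrableOn w (uIcc a b) := by
      rw [uIcc_of_le hab]; exact hw.integrableOn_compact isCompact_Icc
    simpa only [uIcc_of_le hab] using intervalIntegral.continuousOn_primitive_interval hw_int
  have hψ' : ∀ t ∈ Ioo a b, HasDerivAt ψ
      (Real.exp (α * (b - t)) * (φ' t - (α * φ t + g t))) t := by
    intro t ht
    have hIcc : Icc a b ∈ nhds t := Icc_mem_nhds ht.1 ht.2
    have hexp : HasDerivAt (fun t => Real.exp (α * (b - t)))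
        (Real.exp (α * (b - t)) * (α * -1)) t :=
      (((hasDerivAt_id t).const_sub b).const_mul α).exp
    have hw_int : IntervalIntegrable w volume a t :=
      (hw.mono (uIcc_subset_Icc (left_mem_Icc.2 hab) (Ioo_subset_Icc_self ht))).intervalIntegrable
    have hprim : HasDerivAt (fun t => ∫ s in a..t, w s) (w t) t :=
      intervalIntegral.integral_hasDerivAt_right hw_int
        ⟨Icc a b, hIcc, hw.aestronglyMeasurable measurableSet_Icc⟩ (hw.continuousAt hIcc)
    refine ((hφ' t ht).mul hexp).sub hprim |>.congr_deriv ?_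
    simp only [w]; ring
  have hψ_anti : AntitoneOn ψ (Icc a b) := by
    refine antitoneOn_of_hasDerivWithinAt_nonpos (convex_Icc a b) hψ_cont
      (f' := fun t => Real.exp (α * (b - t)) * (φ' t - (α * φ t + g t)))
      (fun t ht => ?_) (fun t ht => ?_) <;> rw [interior_Icc] at ht
    · exact (hψ' t ht).hasDerivWithinAt
    · exact mul_nonpos_of_nonneg_of_nonpos (Real.exp_pos _).le (sub_nonpos.2 (hle t ht))
  have hψ_ba := hψ_anti (left_mem_Icc.2 hab) (right_mem_Icc.2 hab) hab
  simp only [ψ, sub_self, mul_zero, Real.exp_zero, mul_one, intervalIntegral.integral_same,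
    sub_zero] at hψ_ba
  linarith

theorem two_mul_inner_le_mul_norm_sq_add_inv_mul_norm_sq {E : Type*} [NormedAddCommGroup E]
    [InnerProductSpace ℝ E] (x y : E) {ε : ℝ} (hε : 0 < ε) :
    2 * ⟪x, y⟫ ≤ ε * ‖y‖ ^ 2 + ε⁻¹ * ‖x‖ ^ 2 := by
  have hyoung : 2 * (‖x‖ * ‖y‖) ≤ ε * ‖y‖ ^ 2 + ε⁻¹ * ‖x‖ ^ 2 := by
    have hsq : 0 ≤ ε⁻¹ * (ε * ‖y‖ - ‖x‖) ^ 2 := by positivity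
    have hexpand : ε⁻¹ * (ε * ‖y‖ - ‖x‖) ^ 2
        = ε * ‖y‖ ^ 2 + ε⁻¹ * ‖x‖ ^ 2 - 2 * (‖x‖ * ‖y‖) := by
      field_simp; ring
    linarith
  linarith [real_inner_le_norm x y]

theorem two_mul_inner_add_le_of_inner_le_neg_mul {E : Type*} [NormedAddCommGroup E]
    [InnerProductSpace ℝ E] (f w z : E) {κ ε : ℝ} (hw : ⟪w, z⟫ ≤ -κ * ‖z‖ ^ 2) (hε : 0 < ε) :
    2 * ⟪f + w, z⟫ ≤ (ε - 2 * κ) * ‖z‖ ^ 2 + ε⁻¹ * ‖f‖ ^ 2 := by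
  rw [inner_add_left]
  linarith [two_mul_inner_le_mul_norm_sq_add_inv_mul_norm_sq f z hε]

theorem stmt_2_general (d : ℕ) (κ R : ℝ)
    (b : EuclideanSpace ℝ (Fin d) → EuclideanSpace ℝ (Fin d))
    (hb : ∀ x y : EuclideanSpace ℝ (Fin d), R ≤ ‖x‖ → R ≤ ‖y‖ →
      ⟪b x - b y, x - y⟫ ≤ -κ * ‖x - y‖ ^ 2)
    (f u v u' v' : ℝ → EuclideanSpace ℝ (Fin d))
    (hf : ContinuousOn f (Icc 0 1))
    (hu : ∀ t ∈ Icc (0:ℝ) 1, HasDerivAt u (u' t) t)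
    (hv : ∀ t ∈ Icc (0:ℝ) 1, HasDerivAt v (v' t) t)
    (hode : ∀ t ∈ Icc (0:ℝ) 1, u' t - v' t = f t + b (u t) - b (v t))
    (t₁ t₂ : ℝ) (ht₁ : 0 ≤ t₁) (ht₁₂ : t₁ ≤ t₂) (ht₂ : t₂ ≤ 1)
    (hregion : ∀ t ∈ Icc t₁ t₂, R ≤ ‖u t‖ ∧ R ≤ ‖v t‖) :
    ∀ ε > (0:ℝ),
      ‖u t₂ - v t₂‖ ^ 2 ≤ ‖u t₁ - v t₁‖ ^ 2 * Real.exp ((ε - 2 * κ) * (t₂ - t₁))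
        + ε⁻¹ * ∫ s in t₁..t₂, Real.exp ((ε - 2 * κ) * (t₂ - s)) * ‖f s‖ ^ 2 := by
  intro ε hε
  have hsub : Icc t₁ t₂ ⊆ Icc 0 1 := Icc_subset_Icc ht₁ ht₂
  have hdist : ∀ t ∈ Icc t₁ t₂, HasDerivAt (fun t => ‖u t - v t‖ ^ 2)
      (2 * ⟪u t - v t, u' t - v' t⟫) t :=
    fun t ht => ((hu t (hsub ht)).sub (hv t (hsub ht))).norm_sq
  have key := le_exp_mul_add_integral_of_hasDerivAt_le (α := ε - 2 * κ)
    (g := fun s => ε⁻¹ * ‖f s‖ ^ 2) ht₁₂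
    (fun t ht => (hdist t ht).continuousAt.continuousWithinAt)
    (continuousOn_const.mul ((hf.mono hsub).norm.pow 2))
    (fun t ht => hdist t (Ioo_subset_Icc_self ht))
    (fun t ht => by
      have ht' := Ioo_subset_Icc_self ht
      rw [real_inner_comm, hode t (hsub ht'), add_sub_assoc]
      exact two_mul_inner_add_le_of_inner_le_neg_mul _ _ _
        (hb _ _ (hregion t ht').1 (hregion t ht').2) hε)
  simpa only [mul_left_comm _ ε⁻¹, intervalIntegral.integral_const_mul] using key

/-- Pathwise Gronwall-type estimate in the contractive region: if the drift `b` is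
`κ`-contractive on `{|x| ≥ R}` and both paths stay in that region on `[t₁, t₂]`,
then the squared distance contracts at rate `ε - 2κ`. -/
theorem stmt_2 (d : ℕ) (κ R : ℝ) (hκ : 0 < κ) (hR : 0 ≤ R)
    (b : EuclideanSpace ℝ (Fin d) → EuclideanSpace ℝ (Fin d))
    (hb : ∀ x y : EuclideanSpace ℝ (Fin d), R ≤ ‖x‖ → R ≤ ‖y‖ →
      ⟪b x - b y, x - y⟫ ≤ -κ * ‖x - y‖ ^ 2)
    (f u v u' v' : ℝ → EuclideanSpace ℝ (Fin d))
    (hf : ContinuousOn f (Icc 0 1))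
    (hu : ∀ t ∈ Icc (0:ℝ) 1, HasDerivAt u (u' t) t)
    (hv : ∀ t ∈ Icc (0:ℝ) 1, HasDerivAt v (v' t) t)
    (hode : ∀ t ∈ Icc (0:ℝ) 1, u' t - v' t = f t + b (u t) - b (v t))
    (t₁ t₂ : ℝ) (ht₁ : 0 ≤ t₁) (ht₁₂ : t₁ ≤ t₂) (ht₂ : t₂ ≤ 1)
    (hregion : ∀ t ∈ Icc t₁ t₂, R ≤ ‖u t‖ ∧ R ≤ ‖v t‖) :
    ∀ ε > (0:ℝ),
      ‖u t₂ - v t₂‖ ^ 2 ≤ ‖u t₁ - v t₁‖ ^ 2 * Real.exp ((ε - 2 * κ) * (t₂ - t₁))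
        + ε⁻¹ * ∫ s in t₁..t₂, Real.exp ((ε - 2 * κ) * (t₂ - s)) * ‖f s‖ ^ 2 :=
  stmt_2_general d κ R b hb f u v u' v' hf hu hv hode t₁ t₂ ht₁ ht₁₂ ht₂ hregion
end

section
/- Let ϖ > 0 and let z : [0,∞) → [0,∞) be a differentiable function satisfying z'(t) ≤ −2ϖ z(t)^{3/4} for all t ≥ 0. Then z(t)^{1/4} ≤ max(z(0)^{1/4} − ϖ t/2, 0) for all t ≥ 0. In particular, z(t) = 0 for every t ≥ 2 z(0)^{1/4}/ϖ. -/
/-! If `z' ≤ -k z^{1-α}`, then `(z^α)' = α z^{α-1} z' ≤ -α k` wherever `z > 0`, so `z^α` decreases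
at least linearly with slope `α k` for as long as `z` stays positive. Since `z` is nonincreasing,
`z t > 0` forces `z > 0` on all of `[a, t]`, and then the linear bound holds at `t`; otherwise
`z t = 0` and there is nothing to prove. -/

open Set

lemma rpow_sub_one_mul_le_neg_of_le_neg_mul_rpow {α k y d : ℝ} (hy : 0 < y)
    (hd : d ≤ -k * y ^ (1 - α)) : y ^ (α - 1) * d ≤ -k := by
  have hinv : y ^ (α - 1) * y ^ (1 - α) = 1 := by
    rw [← Real.rpow_add hy]; norm_num
  calc y ^ (α - 1) * d ≤ y ^ (α - 1) * (-k * y ^ (1 - α)) :=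
        mul_le_mul_of_nonneg_left hd (Real.rpow_nonneg hy.le _)
    _ = -k := by rw [mul_left_comm, hinv, mul_one]

section DecayOfRpow

variable {α k a : ℝ} {z z' : ℝ → ℝ}

lemma antitoneOn_Ici_of_le_neg_mul_rpow (hk : 0 ≤ k) (hz_nonneg : ∀ t, a ≤ t → 0 ≤ z t)
    (hz : ∀ t, a ≤ t → HasDerivAt z (z' t) t)
    (hz' : ∀ t, a ≤ t → z' t ≤ -k * z t ^ (1 - α)) : AntitoneOn z (Ici a) := by
  refine antitoneOn_of_hasDerivWithinAt_nonpos (convex_Ici a)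
    (fun t ht => (hz t ht).continuousAt.continuousWithinAt)
    (fun t ht => (hz t (interior_subset ht)).hasDerivWithinAt) fun t ht => ?_
  have ht : a ≤ t := interior_subset ht
  have hdrift : 0 ≤ k * z t ^ (1 - α) := mul_nonneg hk (Real.rpow_nonneg (hz_nonneg t ht) _)
  linarith [hz' t ht]

lemma rpow_le_sub_of_pos_of_le_neg_mul_rpow (hα : 0 ≤ α) {b : ℝ} (hab : a ≤ b)
    (hpos : ∀ t ∈ Icc a b, 0 < z t) (hz : ∀ t ∈ Icc a b, HasDerivAt z (z' t) t)
    (hz' : ∀ t ∈ Icc a b, z' t ≤ -k * z t ^ (1 - α)) :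
    z b ^ α ≤ z a ^ α - α * k * (b - a) := by
  have hderiv : ∀ t ∈ Icc a b,
      HasDerivAt (fun s => z s ^ α) (z' t * α * z t ^ (α - 1)) t := fun t ht =>
    (hz t ht).rpow_const (Or.inl (hpos t ht).ne')
  have hline : ∀ t, HasDerivAt (fun s => z a ^ α - α * k * (s - a)) (-(α * k)) t := fun t => by
    simpa using ((hasDerivAt_id t).sub_const a).const_mul (α * k) |>.const_sub (z a ^ α)
  have hslope : ∀ t ∈ Icc a b, z' t * α * z t ^ (α - 1) ≤ -(α * k) := fun t ht => by
    calc z' t * α * z t ^ (α - 1) = α * (z t ^ (α - 1) * z' t) := by ring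
      _ ≤ α * -k := mul_le_mul_of_nonneg_left
          (rpow_sub_one_mul_le_neg_of_le_neg_mul_rpow (hpos t ht) (hz' t ht)) hα
      _ = -(α * k) := by ring
  exact image_le_of_deriv_right_le_deriv_boundary
    (fun t ht => (hderiv t ht).continuousAt.continuousWithinAt)
    (fun t ht => (hderiv t (Ico_subset_Icc_self ht)).hasDerivWithinAt) (by simp)
    (fun t _ => (hline t).continuousAt.continuousWithinAt)
    (fun t _ => (hline t).hasDerivWithinAt)
    (fun t ht => hslope t (Ico_subset_Icc_self ht)) (right_mem_Icc.2 hab)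

lemma rpow_le_max_sub_of_le_neg_mul_rpow (hα : 0 < α) (hk : 0 ≤ k)
    (hz_nonneg : ∀ t, a ≤ t → 0 ≤ z t) (hz : ∀ t, a ≤ t → HasDerivAt z (z' t) t)
    (hz' : ∀ t, a ≤ t → z' t ≤ -k * z t ^ (1 - α)) {t : ℝ} (ht : a ≤ t) :
    z t ^ α ≤ max (z a ^ α - α * k * (t - a)) 0 := by
  rcases (hz_nonneg t ht).eq_or_lt with hzt | hzt
  · rw [← hzt, Real.zero_rpow hα.ne']
    exact le_max_right _ _
  have hanti := antitoneOn_Ici_of_le_neg_mul_rpow hk hz_nonneg hz hz'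
  have hpos : ∀ s ∈ Icc a t, 0 < z s := fun s hs =>
    hzt.trans_le (hanti (mem_Ici.2 hs.1) (mem_Ici.2 ht) hs.2)
  exact (rpow_le_sub_of_pos_of_le_neg_mul_rpow hα.le ht hpos (fun s hs => hz s hs.1)
    (fun s hs => hz' s hs.1)).trans (le_max_left _ _)

lemma eq_zero_of_le_neg_mul_rpow (hα : 0 < α) (hk : 0 < k)
    (hz_nonneg : ∀ t, a ≤ t → 0 ≤ z t) (hz : ∀ t, a ≤ t → HasDerivAt z (z' t) t)
    (hz' : ∀ t, a ≤ t → z' t ≤ -k * z t ^ (1 - α)) {t : ℝ}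
    (ht : a + z a ^ α / (α * k) ≤ t) : z t = 0 := by
  have hαk : 0 < α * k := mul_pos hα hk
  have hza : 0 ≤ z a ^ α := Real.rpow_nonneg (hz_nonneg a le_rfl) α
  have hat : a ≤ t := (le_add_of_nonneg_right (by positivity)).trans ht
  have hneg : z a ^ α - α * k * (t - a) ≤ 0 :=
    sub_nonpos.2 ((div_le_iff₀' hαk).1 (le_sub_iff_add_le'.2 ht))
  have hle := rpow_le_max_sub_of_le_neg_mul_rpow hα hk.le hz_nonneg hz hz' hat
  rw [max_eq_right hneg] at hle
  exact (Real.rpow_eq_zero (hz_nonneg t hat) hα.ne').1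
    (hle.antisymm (Real.rpow_nonneg (hz_nonneg t hat) _))

end DecayOfRpow

/-- Comparison/decay estimate: if `z ≥ 0` satisfies `z' ≤ -2ϖ z^{3/4}` on `[0,∞)`,
then `z(t)^{1/4} ≤ max(z(0)^{1/4} - ϖ t/2, 0)`; in particular `z` vanishes after
time `2 z(0)^{1/4}/ϖ`. -/
theorem stmt_3 (ϖ : ℝ) (hϖ : 0 < ϖ) (z z' : ℝ → ℝ)
    (hz_nonneg : ∀ t, 0 ≤ t → 0 ≤ z t)
    (hz : ∀ t, 0 ≤ t → HasDerivAt z (z' t) t)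
    (hz' : ∀ t, 0 ≤ t → z' t ≤ -2 * ϖ * z t ^ (3/4 : ℝ)) :
    (∀ t, 0 ≤ t → z t ^ (1/4 : ℝ) ≤ max (z 0 ^ (1/4 : ℝ) - ϖ * t / 2) 0) ∧
      (∀ t, 2 * z 0 ^ (1/4 : ℝ) / ϖ ≤ t → z t = 0) := by
  have hz'' : ∀ t, 0 ≤ t → z' t ≤ -(2 * ϖ) * z t ^ (1 - 1/4 : ℝ) := fun t ht => by
    convert hz' t ht using 3 <;> norm_num
  refine ⟨fun t ht => ?_, fun t ht => ?_⟩
  · convert rpow_le_max_sub_of_le_neg_mul_rpow (by norm_num) (by positivity)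
      hz_nonneg hz hz'' ht using 3
    ring
  · refine eq_zero_of_le_neg_mul_rpow (by norm_num) (by positivity) hz_nonneg hz hz'' ?_
    convert ht using 1; field_simp; ring
end

section
/- Let λ ≥ 0 and let b : ℝ^d → ℝ^d satisfy ⟨b(x) − b(y), x − y⟩ ≤ λ|x − y|² for all x, y ∈ ℝ^d. Let x : [0,∞) → ℝ^d be continuous and let ϖ > 0. If ρ : [0,∞) → ℝ^d is differentiable and satisfies ρ'(t) = b(x(t) + ρ(t)) − b(x(t)) − ϖ g(ρ(t)) − λ ρ(t) for all t ≥ 0, then |ρ(t)|^{1/2} ≤ max(|ρ(0)|^{1/2} − ϖ t/2, 0) for all t ≥ 0. In particular ρ(t) = 0 for all t ≥ 2|ρ(0)|^{1/2}/ϖ. -/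
open Set
open scoped RealInnerProductSpace

/-- The map `g(ρ) = |ρ|^{-1/2} ρ` for `ρ ≠ 0`, `g(0) = 0` (note `0 ^ (-(1/2)) = 0`
for the real power function). -/
noncomputable def gMap (d : ℕ) (ρ : EuclideanSpace ℝ (Fin d)) : EuclideanSpace ℝ (Fin d) :=
  (‖ρ‖ ^ (-(1/2) : ℝ)) • ρ

/-!
Write `u = |ρ|^{1/2}`, so that `u⁴ = |ρ|²`. Testing the equation against `ρ`, the one-sided
Lipschitz bound on `b` cancels the term `-λρ` and leaves `(u⁴)' ≤ -2ϖ u³`, i.e. formally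
`u' ≤ -ϖ/2`. Since `u` need not be differentiable where `ρ` vanishes, this is made rigorous by
comparing `u⁴` with the strict barriers `(u(0) + ε - (ϖ - ε) t/2)⁴` and letting `ε → 0`; once
`u` hits `0` it stays there because `u⁴` is nonincreasing.
-/

section QuarticBarrier

variable {u D : ℝ → ℝ} {κ : ℝ}

lemma pow_four_le_perturbed_barrier (hu : ∀ t, 0 ≤ t → 0 ≤ u t)
    (hD : ∀ t, 0 ≤ t → HasDerivAt (fun s => u s ^ 4) (D t) t)
    (hDle : ∀ t, 0 ≤ t → D t ≤ -(2 * κ) * u t ^ 3)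
    {t : ℝ} (ht : 0 ≤ t) (hpos : 0 ≤ u 0 - κ * t / 2) {ε : ℝ} (hε : 0 < ε) :
    u t ^ 4 ≤ (u 0 + ε - (κ - ε) * t / 2) ^ 4 := by
  have hB : ∀ s, HasDerivAt (fun s => (u 0 + ε - (κ - ε) * s / 2) ^ 4)
      (4 * (u 0 + ε - (κ - ε) * s / 2) ^ 3 * (-(κ - ε) / 2)) s := by
    intro s
    have hL : HasDerivAt (fun s => u 0 + ε - (κ - ε) * s / 2) (-(κ - ε) / 2) s :=
      ((((hasDerivAt_id' s).const_mul (κ - ε)).div_const 2).const_sub (u 0 + ε)).congr_deriv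
        (by ring)
    exact (hL.fun_pow 4).congr_deriv (by norm_num)
  refine image_le_of_deriv_right_lt_deriv_boundary'
    (fun s hs => (hD s hs.1).continuousAt.continuousWithinAt)
    (fun s hs => (hD s hs.1).hasDerivWithinAt) ?_
    (fun s _ => (hB s).continuousAt.continuousWithinAt) (fun s _ => (hB s).hasDerivWithinAt)
    ?_ ⟨ht, le_rfl⟩
  · simp only [mul_zero, zero_div, sub_zero]
    exact pow_le_pow_left₀ (hu 0 le_rfl) (by linarith) 4
  · rintro s ⟨hs0, hst⟩ hcontact
    set m := u 0 + ε - (κ - ε) * s / 2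
    have hu0 := hu 0 le_rfl
    have hdrift : 0 ≤ u 0 - κ * s / 2 := by
      rcases le_or_gt 0 κ with hκ | hκ
      · nlinarith [mul_le_mul_of_nonneg_left hst.le hκ]
      · nlinarith [mul_nonpos_of_nonpos_of_nonneg hκ.le hs0]
    have hm : 0 < m := by
      have hsplit : m = (u 0 - κ * s / 2) + ε * (1 + s / 2) := by simp only [m]; ring
      rw [hsplit]
      positivity
    have hum : u s = m := (pow_left_inj₀ (hu s hs0) hm.le four_ne_zero).1 hcontact
    have hDs := hDle s hs0
    rw [hum] at hDs
    nlinarith [pow_pos hm 3]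

lemma le_sub_of_hasDerivAt_pow_four_le (hu : ∀ t, 0 ≤ t → 0 ≤ u t)
    (hD : ∀ t, 0 ≤ t → HasDerivAt (fun s => u s ^ 4) (D t) t)
    (hDle : ∀ t, 0 ≤ t → D t ≤ -(2 * κ) * u t ^ 3)
    {t : ℝ} (ht : 0 ≤ t) (hpos : 0 ≤ u 0 - κ * t / 2) :
    u t ≤ u 0 - κ * t / 2 := by
  have hlim : Filter.Tendsto (fun ε => (u 0 + ε - (κ - ε) * t / 2) ^ 4)
      (nhdsWithin 0 (Ioi 0)) (nhds ((u 0 - κ * t / 2) ^ 4)) := by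
    refine Filter.Tendsto.mono_left ?_ nhdsWithin_le_nhds
    convert (by fun_prop : Continuous fun ε : ℝ => (u 0 + ε - (κ - ε) * t / 2) ^ 4).tendsto 0
      using 2
    ring
  have h4 : u t ^ 4 ≤ (u 0 - κ * t / 2) ^ 4 := ge_of_tendsto hlim <|
    eventually_nhdsWithin_of_forall fun ε hε =>
      pow_four_le_perturbed_barrier hu hD hDle ht hpos hε
  exact (pow_le_pow_iff_left₀ (hu t ht) hpos four_ne_zero).1 h4

lemma le_max_of_hasDerivAt_pow_four_le (hu : ∀ t, 0 ≤ t → 0 ≤ u t)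
    (hD : ∀ t, 0 ≤ t → HasDerivAt (fun s => u s ^ 4) (D t) t)
    (hDle : ∀ t, 0 ≤ t → D t ≤ -(2 * κ) * u t ^ 3) {t : ℝ} (ht : 0 ≤ t) :
    u t ≤ max (u 0 - κ * t / 2) 0 := by
  rcases le_or_gt 0 (u 0 - κ * t / 2) with hpos | hneg
  · exact le_max_of_le_left (le_sub_of_hasDerivAt_pow_four_le hu hD hDle ht hpos)
  have hu0 := hu 0 le_rfl
  have hκ : 0 < κ := by
    by_contra! hκ
    nlinarith [mul_nonpos_of_nonpos_of_nonneg hκ ht]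
  set T := 2 * u 0 / κ
  have hT0 : 0 ≤ T := by positivity
  have hTt : T ≤ t := by
    rw [div_le_iff₀ hκ]
    linarith
  have hT : u 0 - κ * T / 2 = 0 := by
    simp only [T]
    field_simp
    ring
  have huT : u T = 0 := le_antisymm
    (hT ▸ le_sub_of_hasDerivAt_pow_four_le hu hD hDle hT0 hT.ge) (hu T hT0)
  have hanti : AntitoneOn (fun s => u s ^ 4) (Ici 0) := by
    refine antitoneOn_of_hasDerivWithinAt_nonpos (convex_Ici 0)
      (fun s hs => (hD s hs).continuousAt.continuousWithinAt)
      (fun s hs => (hD s (interior_subset hs)).hasDerivWithinAt) fun s hs => ?_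
    have hs : 0 ≤ s := interior_subset hs
    nlinarith [hDle s hs, pow_nonneg (hu s hs) 3]
  have h4 : u t ^ 4 ≤ 0 ^ 4 := by
    simpa [huT] using hanti (show T ∈ Ici 0 from hT0) (show t ∈ Ici 0 from hT0.trans hTt) hTt
  exact le_max_of_le_right ((pow_le_pow_iff_left₀ (hu t ht) le_rfl four_ne_zero).1 h4)

end QuarticBarrier

lemma inner_gMap_self (d : ℕ) (r : EuclideanSpace ℝ (Fin d)) :
    ⟪gMap d r, r⟫ = √‖r‖ ^ 3 := by
  rcases eq_or_ne r 0 with rfl | hr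
  · simp [gMap]
  have hs : 0 < √‖r‖ := Real.sqrt_pos.2 (norm_pos_iff.2 hr)
  have hnorm : ‖r‖ = √‖r‖ ^ 2 := (Real.sq_sqrt (norm_nonneg r)).symm
  rw [gMap, real_inner_smul_left, real_inner_self_eq_norm_sq, Real.rpow_neg (norm_nonneg r),
    ← Real.sqrt_eq_rpow, hnorm, Real.sqrt_sq hs.le]
  field_simp

lemma inner_controlledField_le {d : ℕ} {lam ϖ : ℝ}
    {b : EuclideanSpace ℝ (Fin d) → EuclideanSpace ℝ (Fin d)}
    (hb : ∀ x y : EuclideanSpace ℝ (Fin d), ⟪b x - b y, x - y⟫ ≤ lam * ‖x - y‖ ^ 2)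
    (y r : EuclideanSpace ℝ (Fin d)) :
    ⟪r, b (y + r) - b y - ϖ • gMap d r - lam • r⟫ ≤ -ϖ * √‖r‖ ^ 3 := by
  have hlip := hb (y + r) y
  rw [add_sub_cancel_left, real_inner_comm] at hlip
  rw [inner_sub_right, inner_sub_right, real_inner_smul_right, real_inner_smul_right,
    real_inner_comm (gMap d r), inner_gMap_self, real_inner_self_eq_norm_sq]
  linarith

theorem stmt_4_general (d : ℕ) (lam : ℝ)
    (b : EuclideanSpace ℝ (Fin d) → EuclideanSpace ℝ (Fin d))
    (hb : ∀ x y : EuclideanSpace ℝ (Fin d), ⟪b x - b y, x - y⟫ ≤ lam * ‖x - y‖ ^ 2)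
    (x : ℝ → EuclideanSpace ℝ (Fin d))
    (ϖ : ℝ) (hϖ : 0 < ϖ) (ρ : ℝ → EuclideanSpace ℝ (Fin d))
    (hρ : ∀ t, 0 ≤ t →
      HasDerivAt ρ (b (x t + ρ t) - b (x t) - ϖ • gMap d (ρ t) - lam • ρ t) t) :
    (∀ t, 0 ≤ t → ‖ρ t‖ ^ (1/2 : ℝ) ≤ max (‖ρ 0‖ ^ (1/2 : ℝ) - ϖ * t / 2) 0) ∧
      (∀ t, 2 * ‖ρ 0‖ ^ (1/2 : ℝ) / ϖ ≤ t → ρ t = 0) := by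
  simp only [← Real.sqrt_eq_rpow]
  have hu4 : (fun s => √‖ρ s‖ ^ 4) = fun s => ‖ρ s‖ ^ 2 := by
    ext s
    rw [show 4 = 2 * 2 by rfl, pow_mul, Real.sq_sqrt (norm_nonneg _)]
  have key : ∀ t, 0 ≤ t → √‖ρ t‖ ≤ max (√‖ρ 0‖ - ϖ * t / 2) 0 :=
    fun t ht => le_max_of_hasDerivAt_pow_four_le (fun _ _ => Real.sqrt_nonneg _)
      (fun s hs => hu4 ▸ (hρ s hs).norm_sq)
      (fun s _ => by linarith [inner_controlledField_le (ϖ := ϖ) hb (x s) (ρ s)]) ht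
  refine ⟨key, fun t ht => ?_⟩
  have ht0 : 0 ≤ t := le_trans (by positivity) ht
  have hneg : √‖ρ 0‖ - ϖ * t / 2 ≤ 0 := by
    rw [div_le_iff₀ hϖ] at ht
    linarith
  have hzero : √‖ρ t‖ = 0 :=
    le_antisymm ((key t ht0).trans (max_le hneg le_rfl)) (Real.sqrt_nonneg _)
  rwa [Real.sqrt_eq_zero (norm_nonneg _), norm_eq_zero] at hzero

/-- Decay estimate (eq:controlrhott): the controlled ODE solution satisfies
`|ρ(t)|^{1/2} ≤ max(|ρ(0)|^{1/2} - ϖ t/2, 0)`, hence reaches `0` in finite time. -/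
theorem stmt_4 (d : ℕ) (lam : ℝ) (hlam : 0 ≤ lam)
    (b : EuclideanSpace ℝ (Fin d) → EuclideanSpace ℝ (Fin d))
    (hb : ∀ x y : EuclideanSpace ℝ (Fin d), ⟪b x - b y, x - y⟫ ≤ lam * ‖x - y‖ ^ 2)
    (x : ℝ → EuclideanSpace ℝ (Fin d)) (hx : Continuous x)
    (ϖ : ℝ) (hϖ : 0 < ϖ) (ρ : ℝ → EuclideanSpace ℝ (Fin d))
    (hρ : ∀ t, 0 ≤ t →
      HasDerivAt ρ (b (x t + ρ t) - b (x t) - ϖ • gMap d (ρ t) - lam • ρ t) t) :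
    (∀ t, 0 ≤ t → ‖ρ t‖ ^ (1/2 : ℝ) ≤ max (‖ρ 0‖ ^ (1/2 : ℝ) - ϖ * t / 2) 0) ∧
      (∀ t, 2 * ‖ρ 0‖ ^ (1/2 : ℝ) / ϖ ≤ t → ρ t = 0) :=
  stmt_4_general d lam b hb x ϖ hϖ ρ hρ
end

section
/- Let λ ≥ 0 and let b : ℝ^d → ℝ^d satisfy ⟨b(x) − b(y), x − y⟩ ≤ λ|x − y|² for all x, y ∈ ℝ^d. Let x : [0,∞) → ℝ^d be continuous, let ρ : [0,∞) → ℝ^d be differentiable with ϖ := 2|ρ(0)|^{1/2} > 0 and ρ'(t) = b(x(t) + ρ(t)) − b(x(t)) − ϖ g(ρ(t)) − λ ρ(t) for all t ≥ 0, and let ς : [0,1] → ℝ^d be continuously differentiable. Define φ(t) = ϖ g(ρ(t)) + λ ρ(t) + ς'(t). Then ρ(1) = 0 and sup_{t∈[0,1]} |φ(t)| ≤ (2 + λ)|ρ(0)| + sup_{t∈[0,1]} |ς'(t)|. -/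
open Set
open scoped RealInnerProductSpace

section Extinction

variable {E : Type*} [NormedAddCommGroup E] [InnerProductSpace ℝ E] {ρ ρ' : ℝ → E}

lemma antitoneOn_norm_of_inner_deriv_nonpos (hρ : ∀ t, 0 ≤ t → HasDerivAt ρ (ρ' t) t)
    (hdiss : ∀ t, 0 ≤ t → ⟪ρ t, ρ' t⟫ ≤ 0) :
    AntitoneOn (fun t => ‖ρ t‖) (Ici 0) := by
  have hsq : AntitoneOn (fun t => ‖ρ t‖ ^ 2) (Ici 0) :=
    antitoneOn_of_hasDerivWithinAt_nonpos (convex_Ici 0)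
      (fun t ht => (hρ t ht).norm_sq.continuousAt.continuousWithinAt)
      (fun t ht => (hρ t (interior_subset ht)).norm_sq.hasDerivWithinAt)
      (fun t ht => by nlinarith [hdiss t (interior_subset ht)])
  intro s hs t ht hst
  exact (pow_le_pow_iff_left₀ (norm_nonneg _) (norm_nonneg _) two_ne_zero).1 (hsq hs ht hst)

lemma HasDerivAt.norm_rpow_half {v : E} {t : ℝ} (hρ : HasDerivAt ρ v t) (h0 : ρ t ≠ 0) :
    HasDerivAt (fun s => ‖ρ s‖ ^ (1/2 : ℝ)) (⟪ρ t, v⟫ / (2 * ‖ρ t‖ ^ (3/2 : ℝ))) t := by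
  have hn : 0 < ‖ρ t‖ := norm_pos_iff.2 h0
  have hsq : ∀ s, ‖ρ s‖ ^ (1/2 : ℝ) = (‖ρ s‖ ^ 2) ^ (1/4 : ℝ) := fun s => by
    rw [← Real.rpow_natCast, ← Real.rpow_mul (norm_nonneg _)]; norm_num
  simp only [hsq]
  convert hρ.norm_sq.rpow_const (p := 1/4) (Or.inl (by positivity)) using 1
  rw [← Real.rpow_natCast, ← Real.rpow_mul hn.le, show (3/2 : ℝ) = -((2 : ℕ) * (1/4 - 1)) by
    norm_num, Real.rpow_neg hn.le]
  field_simp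
  ring

lemma eq_zero_of_inner_deriv_le_neg_mul_rpow {k T : ℝ} (hk : 0 ≤ k) (hT : 0 ≤ T)
    (hρ : ∀ t, 0 ≤ t → HasDerivAt ρ (ρ' t) t)
    (hdiss : ∀ t, 0 ≤ t → ⟪ρ t, ρ' t⟫ ≤ -k * ‖ρ t‖ ^ (3/2 : ℝ))
    (hkT : 2 * ‖ρ 0‖ ^ (1/2 : ℝ) ≤ k * T) : ρ T = 0 := by
  by_contra hρT
  have hanti := antitoneOn_norm_of_inner_deriv_nonpos hρ fun t ht =>
    (hdiss t ht).trans (mul_nonpos_of_nonpos_of_nonneg (neg_nonpos.2 hk) (by positivity))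
  have hne : ∀ t ∈ Icc 0 T, ρ t ≠ 0 := fun t ht h0 => hρT <| norm_eq_zero.1 <|
    le_antisymm (by simpa [h0] using hanti ht.1 hT ht.2) (norm_nonneg _)
  have hu : ∀ t ∈ Icc 0 T, HasDerivAt (fun s => ‖ρ s‖ ^ (1/2 : ℝ) + s * (k / 2))
      (⟪ρ t, ρ' t⟫ / (2 * ‖ρ t‖ ^ (3/2 : ℝ)) + k / 2) t := fun t ht =>
    ((hρ t ht.1).norm_rpow_half (hne t ht)).add (hasDerivAt_mul_const (k / 2))
  have hu' : ∀ t ∈ Icc 0 T, ⟪ρ t, ρ' t⟫ / (2 * ‖ρ t‖ ^ (3/2 : ℝ)) + k / 2 ≤ 0 := fun t ht => by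
    have hpos : 0 < ‖ρ t‖ ^ (3/2 : ℝ) := by have := norm_pos_iff.2 (hne t ht); positivity
    rw [div_add' _ _ _ (by positivity), div_nonpos_iff]
    exact Or.inr ⟨by linarith [hdiss t ht.1], by positivity⟩
  have hdecr := antitoneOn_of_hasDerivWithinAt_nonpos (convex_Icc 0 T)
    (fun t ht => (hu t ht).continuousAt.continuousWithinAt)
    (fun t ht => (hu t (interior_subset ht)).hasDerivWithinAt)
    (fun t ht => hu' t (interior_subset ht))
    (left_mem_Icc.2 hT) (right_mem_Icc.2 hT) hT
  have hpos : 0 < ‖ρ T‖ ^ (1/2 : ℝ) := by have := norm_pos_iff.2 hρT; positivity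
  simp only [zero_mul, add_zero] at hdecr
  linarith

end Extinction

section gMap

variable {d : ℕ}

lemma norm_gMap (r : EuclideanSpace ℝ (Fin d)) : ‖gMap d r‖ = ‖r‖ ^ (1/2 : ℝ) := by
  rcases eq_or_ne r 0 with rfl | hr
  · simp [gMap]
  have hn := norm_pos_iff.2 hr
  rw [gMap, norm_smul, Real.norm_of_nonneg (by positivity)]
  conv_lhs => enter [2]; rw [← Real.rpow_one ‖r‖]
  rw [← Real.rpow_add hn]
  norm_num

lemma inner_self_gMap (r : EuclideanSpace ℝ (Fin d)) : ⟪r, gMap d r⟫ = ‖r‖ ^ (3/2 : ℝ) := by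
  rcases eq_or_ne r 0 with rfl | hr
  · simp [gMap]
  rw [gMap, real_inner_smul_right, real_inner_self_eq_norm_sq, ← Real.rpow_natCast,
    ← Real.rpow_add (norm_pos_iff.2 hr)]
  norm_num

lemma inner_feedback_le {lam c : ℝ} {b : EuclideanSpace ℝ (Fin d) → EuclideanSpace ℝ (Fin d)}
    (hb : ∀ x y : EuclideanSpace ℝ (Fin d), ⟪b x - b y, x - y⟫ ≤ lam * ‖x - y‖ ^ 2)
    (x r : EuclideanSpace ℝ (Fin d)) :
    ⟪r, b (x + r) - b x - c • gMap d r - lam • r⟫ ≤ -c * ‖r‖ ^ (3/2 : ℝ) := by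
  have h := hb (x + r) x
  rw [add_sub_cancel_left, real_inner_comm] at h
  rw [inner_sub_right, inner_sub_right, real_inner_smul_right, real_inner_smul_right,
    inner_self_gMap, real_inner_self_eq_norm_sq]
  linarith

end gMap

theorem stmt_5_general (d : ℕ) (lam : ℝ) (hlam : 0 ≤ lam)
    (b : EuclideanSpace ℝ (Fin d) → EuclideanSpace ℝ (Fin d))
    (hb : ∀ x y : EuclideanSpace ℝ (Fin d), ⟪b x - b y, x - y⟫ ≤ lam * ‖x - y‖ ^ 2)
    (x : ℝ → EuclideanSpace ℝ (Fin d))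
    (ρ : ℝ → EuclideanSpace ℝ (Fin d))
    (hρ : ∀ t, 0 ≤ t →
      HasDerivAt ρ (b (x t + ρ t) - b (x t)
        - (2 * ‖ρ 0‖ ^ (1/2 : ℝ)) • gMap d (ρ t) - lam • ρ t) t)
    (ς' : ℝ → EuclideanSpace ℝ (Fin d))
    (hς' : ContinuousOn ς' (Icc 0 1)) :
    ρ 1 = 0 ∧
      ∀ t ∈ Icc (0:ℝ) 1,
        ‖(2 * ‖ρ 0‖ ^ (1/2 : ℝ)) • gMap d (ρ t) + lam • ρ t + ς' t‖ ≤
          (2 + lam) * ‖ρ 0‖ + sSup ((fun s => ‖ς' s‖) '' Icc (0:ℝ) 1) := by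
  set q := ‖ρ 0‖
  set ϖ := 2 * q ^ (1/2 : ℝ) with hϖ_def
  set M := sSup ((fun s => ‖ς' s‖) '' Icc (0:ℝ) 1)
  have hϖ : 0 ≤ ϖ := by positivity
  have hdiss : ∀ t, 0 ≤ t → ⟪ρ t, b (x t + ρ t) - b (x t) - ϖ • gMap d (ρ t) - lam • ρ t⟫ ≤
      -ϖ * ‖ρ t‖ ^ (3/2 : ℝ) :=
    fun t _ => inner_feedback_le hb (x t) (ρ t)
  have hanti := antitoneOn_norm_of_inner_deriv_nonpos hρ fun t ht =>
    (hdiss t ht).trans (mul_nonpos_of_nonpos_of_nonneg (neg_nonpos.2 hϖ) (by positivity))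
  refine ⟨eq_zero_of_inner_deriv_le_neg_mul_rpow hϖ zero_le_one hρ hdiss (by rw [mul_one]),
    fun t ht => ?_⟩
  have hρt : ‖ρ t‖ ≤ q := hanti self_mem_Ici ht.1 ht.1
  have hς't : ‖ς' t‖ ≤ M :=
    le_csSup (isCompact_Icc.image_of_continuousOn hς'.norm).bddAbove ⟨t, ht, rfl⟩
  calc ‖ϖ • gMap d (ρ t) + lam • ρ t + ς' t‖
      ≤ ‖ϖ • gMap d (ρ t)‖ + ‖lam • ρ t‖ + ‖ς' t‖ := norm_add₃_le
    _ = ϖ * ‖ρ t‖ ^ (1/2 : ℝ) + lam * ‖ρ t‖ + ‖ς' t‖ := by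
      rw [norm_smul, norm_smul, norm_gMap, Real.norm_of_nonneg hϖ, Real.norm_of_nonneg hlam]
    _ ≤ ϖ * q ^ (1/2 : ℝ) + lam * q + M := by gcongr
    _ = (2 + lam) * q + M := by
      rw [hϖ_def, mul_assoc, ← Real.sqrt_eq_rpow, Real.mul_self_sqrt (norm_nonneg _)]
      ring

/-- First conclusion of Lemma 6.2: with `ϖ = 2|ρ(0)|^{1/2}`, the control
`φ(t) = ϖ g(ρ(t)) + λ ρ(t) + ς'(t)` steers `ρ` to `0` at time `1`, and
`sup_{[0,1]} |φ| ≤ (2+λ)|ρ(0)| + sup_{[0,1]} |ς'|`. -/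
theorem stmt_5 (d : ℕ) (lam : ℝ) (hlam : 0 ≤ lam)
    (b : EuclideanSpace ℝ (Fin d) → EuclideanSpace ℝ (Fin d))
    (hb : ∀ x y : EuclideanSpace ℝ (Fin d), ⟪b x - b y, x - y⟫ ≤ lam * ‖x - y‖ ^ 2)
    (x : ℝ → EuclideanSpace ℝ (Fin d)) (hx : Continuous x)
    (ρ : ℝ → EuclideanSpace ℝ (Fin d)) (hρ0 : ρ 0 ≠ 0)
    (hρ : ∀ t, 0 ≤ t →
      HasDerivAt ρ (b (x t + ρ t) - b (x t)
        - (2 * ‖ρ 0‖ ^ (1/2 : ℝ)) • gMap d (ρ t) - lam • ρ t) t)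
    (ς ς' : ℝ → EuclideanSpace ℝ (Fin d))
    (hς : ∀ t ∈ Icc (0:ℝ) 1, HasDerivAt ς (ς' t) t)
    (hς' : ContinuousOn ς' (Icc 0 1)) :
    ρ 1 = 0 ∧
      ∀ t ∈ Icc (0:ℝ) 1,
        ‖(2 * ‖ρ 0‖ ^ (1/2 : ℝ)) • gMap d (ρ t) + lam • ρ t + ς' t‖ ≤
          (2 + lam) * ‖ρ 0‖ + sSup ((fun s => ‖ς' s‖) '' Icc (0:ℝ) 1) :=
  stmt_5_general d lam hlam b hb x ρ hρ ς' hς'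
end

section
/- Let λ ≥ 0 and let b : ℝ^d → ℝ^d be Lipschitz with constant L₀ and satisfy ⟨b(x) − b(y), x − y⟩ ≤ λ|x − y|² for all x, y ∈ ℝ^d. Let x : [0,∞) → ℝ^d be continuous, let ρ : [0,∞) → ℝ^d be differentiable with ϖ := 2|ρ(0)|^{1/2} > 0 and ρ'(t) = b(x(t) + ρ(t)) − b(x(t)) − ϖ g(ρ(t)) − λ ρ(t) for all t ≥ 0, let ς : [0,1] → ℝ^d be twice continuously differentiable, and define φ(t) = ϖ g(ρ(t)) + λ ρ(t) + ς'(t). Then there is a constant C > 0 depending only on L₀ and λ such that: (i) |ρ'(t)| ≤ (L₀ + λ)|ρ(t)| + 2|ρ(0)|^{1/2}|ρ(t)|^{1/2} for all t, and (ii) at every t ∈ [0,1] with ρ(t) ≠ 0 the function φ is differentiable at t and |φ'(t)| ≤ C |ρ(0)| + |ς''(t)|. -/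
open Set
open scoped RealInnerProductSpace

section
variable {E : Type*} [NormedAddCommGroup E] [InnerProductSpace ℝ E]

theorem hasFDerivAt_rpow_norm (p : ℝ) {x : E} (hx : x ≠ 0) :
    HasFDerivAt (fun y : E => ‖y‖ ^ p) ((p * ‖x‖ ^ (p - 2)) • innerSL ℝ x) x := by
  have hsq : (fun y : E => ‖y‖ ^ p) = fun y => (‖y‖ ^ 2) ^ (p / 2) := by
    funext y
    rw [← Real.rpow_natCast, ← Real.rpow_mul (norm_nonneg y)]
    ring_nf
  have hx2 : ‖x‖ ^ 2 ≠ 0 := by positivity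
  rw [hsq]
  convert (hasFDerivAt_id x).norm_sq.rpow_const (p := p / 2) (Or.inl hx2) using 1
  · rfl
  have hexp : (‖x‖ ^ 2) ^ (p / 2 - 1) = ‖x‖ ^ (p - 2) := by
    rw [← Real.rpow_natCast, ← Real.rpow_mul (norm_nonneg x)]
    ring_nf
  ext v
  simp only [ContinuousLinearMap.comp_id, smul_apply,
    coe_innerSL_apply, id_eq, hexp, nsmul_eq_mul, smul_eq_mul]
  ring

theorem exists_hasFDerivAt_rpow_norm_smul (p : ℝ) {x : E} (hx : x ≠ 0) :
    ∃ L : E →L[ℝ] E, HasFDerivAt (fun y : E => ‖y‖ ^ p • y) L x ∧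
      ‖L‖ ≤ (1 + |p|) * ‖x‖ ^ p := by
  refine ⟨_, (hasFDerivAt_rpow_norm p hx).smul (hasFDerivAt_id x), ?_⟩
  have hxpos : 0 < ‖x‖ := norm_pos_iff.2 hx
  refine ContinuousLinearMap.opNorm_le_bound _ (by positivity) fun v => ?_
  have hinner : |p * ‖x‖ ^ (p - 2) * ⟪x, v⟫| * ‖x‖ ≤ |p| * ‖x‖ ^ p * ‖v‖ := by
    have hpow : ‖x‖ ^ (p - 2) * ‖x‖ ^ 2 = ‖x‖ ^ p := by
      rw [Real.rpow_sub hxpos, Real.rpow_two, div_mul_cancel₀ _ (by positivity)]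
    calc |p * ‖x‖ ^ (p - 2) * ⟪x, v⟫| * ‖x‖
        ≤ |p| * ‖x‖ ^ (p - 2) * (‖x‖ * ‖v‖) * ‖x‖ := by
          rw [abs_mul, abs_mul, abs_of_nonneg (by positivity : 0 ≤ ‖x‖ ^ (p - 2))]
          gcongr
          exact abs_real_inner_le_norm x v
      _ = |p| * ‖x‖ ^ p * ‖v‖ := by rw [← hpow]; ring
  simp only [add_apply, smul_apply,
    ContinuousLinearMap.id_apply, ContinuousLinearMap.smulRight_apply, coe_innerSL_apply,
    smul_eq_mul]
  calc ‖‖x‖ ^ p • v + (p * ‖x‖ ^ (p - 2) * ⟪x, v⟫) • x‖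
      ≤ ‖x‖ ^ p * ‖v‖ + |p * ‖x‖ ^ (p - 2) * ⟪x, v⟫| * ‖x‖ := by
        refine (norm_add_le _ _).trans ?_
        rw [norm_smul, norm_smul, Real.norm_of_nonneg (by positivity), Real.norm_eq_abs]
    _ ≤ (1 + |p|) * ‖x‖ ^ p * ‖v‖ := by linarith

theorem norm_le_norm_of_inner_deriv_nonpos {γ γ' : ℝ → E} {a : ℝ}
    (hγ : ∀ t, a ≤ t → HasDerivAt γ (γ' t) t) (hinner : ∀ t, a ≤ t → ⟪γ' t, γ t⟫ ≤ 0)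
    {t : ℝ} (ht : a ≤ t) : ‖γ t‖ ≤ ‖γ a‖ := by
  have hsq : AntitoneOn (fun s => ‖γ s‖ ^ 2) (Ici a) := by
    refine antitoneOn_of_hasDerivWithinAt_nonpos (convex_Ici a)
      (fun s hs => (hγ s hs).norm_sq.continuousAt.continuousWithinAt)
      (fun s hs => (hγ s (le_of_lt (by simpa using hs))).norm_sq.hasDerivWithinAt)
      (fun s hs => ?_)
    rw [real_inner_comm]
    nlinarith [hinner s (le_of_lt (by simpa using hs))]
  exact le_of_pow_le_pow_left₀ two_ne_zero (norm_nonneg _)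
    (hsq self_mem_Ici ht ht)

end

theorem le_mul_of_le_mul_add_rpow_half {K r r₀ R : ℝ} (hK : 0 ≤ K) (hr : 0 ≤ r)
    (hrr₀ : r ≤ r₀) (hR : R ≤ K * r + 2 * r₀ ^ (1/2 : ℝ) * r ^ (1/2 : ℝ)) :
    R ≤ (K + 2) * r₀ := by
  simp only [← Real.sqrt_eq_rpow] at hR
  have hr₀ : √r₀ * √r₀ = r₀ := Real.mul_self_sqrt (hr.trans hrr₀)
  have hss₀ : √r ≤ √r₀ := Real.sqrt_le_sqrt hrr₀
  nlinarith [Real.sqrt_nonneg r₀]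

theorem rpow_half_mul_rpow_neg_half_mul_le {K r r₀ R : ℝ} (hK : 0 ≤ K) (hr : 0 < r)
    (hrr₀ : r ≤ r₀) (hR : R ≤ K * r + 2 * r₀ ^ (1/2 : ℝ) * r ^ (1/2 : ℝ)) :
    r₀ ^ (1/2 : ℝ) * (r ^ (-(1/2) : ℝ) * R) ≤ (K + 2) * r₀ := by
  simp only [Real.rpow_neg hr.le, ← Real.sqrt_eq_rpow] at hR ⊢
  have hs : 0 < √r := Real.sqrt_pos.2 hr
  have hss₀ : √r ≤ √r₀ := Real.sqrt_le_sqrt hrr₀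
  have hr₀ : √r₀ * √r₀ = r₀ := Real.mul_self_sqrt (hr.le.trans hrr₀)
  have hR' : (√r)⁻¹ * R ≤ K * √r + 2 * √r₀ := by
    rw [inv_mul_le_iff₀ hs]
    nlinarith [Real.mul_self_sqrt hr.le]
  calc √r₀ * ((√r)⁻¹ * R) ≤ √r₀ * (K * √r₀ + 2 * √r₀) := by gcongr; nlinarith
    _ = (K + 2) * r₀ := by linear_combination (K + 2) * hr₀

section
variable {d : ℕ}

theorem norm_gMap_le (ρ : EuclideanSpace ℝ (Fin d)) : ‖gMap d ρ‖ ≤ ‖ρ‖ ^ (1/2 : ℝ) := by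
  rcases eq_or_ne ρ 0 with rfl | hρ
  · simp [gMap]
  · have hpos : 0 < ‖ρ‖ := norm_pos_iff.2 hρ
    rw [gMap, norm_smul, Real.norm_of_nonneg (by positivity), ← Real.rpow_add_one hpos.ne']
    norm_num

theorem inner_gMap_self_nonneg (ρ : EuclideanSpace ℝ (Fin d)) : 0 ≤ ⟪gMap d ρ, ρ⟫ := by
  rw [gMap, real_inner_smul_left, real_inner_self_eq_norm_sq]
  positivity

theorem norm_drift_le {L₀ : NNReal} {lam ϖ : ℝ}
    {b : EuclideanSpace ℝ (Fin d) → EuclideanSpace ℝ (Fin d)} (hb : LipschitzWith L₀ b)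
    (hlam : 0 ≤ lam) (hϖ : 0 ≤ ϖ) (x ρ : EuclideanSpace ℝ (Fin d)) :
    ‖b (x + ρ) - b x - ϖ • gMap d ρ - lam • ρ‖ ≤
      ((L₀ : ℝ) + lam) * ‖ρ‖ + ϖ * ‖ρ‖ ^ (1/2 : ℝ) := by
  have hbρ : ‖b (x + ρ) - b x‖ ≤ L₀ * ‖ρ‖ := by
    simpa [dist_eq_norm] using hb.dist_le_mul (x + ρ) x
  have hgρ : ‖ϖ • gMap d ρ‖ ≤ ϖ * ‖ρ‖ ^ (1/2 : ℝ) := by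
    rw [norm_smul, Real.norm_of_nonneg hϖ]
    exact mul_le_mul_of_nonneg_left (norm_gMap_le ρ) hϖ
  have hlamρ : ‖lam • ρ‖ = lam * ‖ρ‖ := by rw [norm_smul, Real.norm_of_nonneg hlam]
  calc _ ≤ ‖b (x + ρ) - b x‖ + ‖ϖ • gMap d ρ‖ + ‖lam • ρ‖ :=
        (norm_sub_le _ _).trans (add_le_add_left (norm_sub_le _ _) _)
    _ ≤ _ := by linarith

theorem inner_drift_self_nonpos {lam ϖ : ℝ}
    {b : EuclideanSpace ℝ (Fin d) → EuclideanSpace ℝ (Fin d)}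
    (hmono : ∀ x y, ⟪b x - b y, x - y⟫ ≤ lam * ‖x - y‖ ^ 2) (hϖ : 0 ≤ ϖ)
    (x ρ : EuclideanSpace ℝ (Fin d)) :
    ⟪b (x + ρ) - b x - ϖ • gMap d ρ - lam • ρ, ρ⟫ ≤ 0 := by
  have hbρ : ⟪b (x + ρ) - b x, ρ⟫ ≤ lam * ‖ρ‖ ^ 2 := by
    simpa using hmono (x + ρ) x
  have hgρ := mul_nonneg hϖ (inner_gMap_self_nonneg ρ)
  rw [inner_sub_left, inner_sub_left, real_inner_smul_left, real_inner_smul_left,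
    real_inner_self_eq_norm_sq]
  linarith

end

/-- Second conclusion of Lemma 6.2 (eq:phidotinfty): there is a constant `C > 0`
depending only on the Lipschitz constant `L₀` of `b` and `λ` such that (i) the
derivative of `ρ` satisfies `|ρ'(t)| ≤ (L₀+λ)|ρ(t)| + 2|ρ(0)|^{1/2}|ρ(t)|^{1/2}`,
and (ii) wherever `ρ(t) ≠ 0` on `[0,1]`, the control
`φ = ϖ g(ρ) + λρ + ς'` (with `ϖ = 2|ρ(0)|^{1/2}`) is differentiable with
`|φ'(t)| ≤ C|ρ(0)| + |ς''(t)|`. -/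
theorem stmt_6 (d : ℕ) (L₀ : NNReal) (lam : ℝ) (hlam : 0 ≤ lam) :
    ∃ C > (0:ℝ),
      ∀ (b : EuclideanSpace ℝ (Fin d) → EuclideanSpace ℝ (Fin d)),
        LipschitzWith L₀ b →
        (∀ x y : EuclideanSpace ℝ (Fin d), ⟪b x - b y, x - y⟫ ≤ lam * ‖x - y‖ ^ 2) →
        ∀ (x ρ : ℝ → EuclideanSpace ℝ (Fin d)), Continuous x → ρ 0 ≠ 0 →
        (∀ t, 0 ≤ t →
          HasDerivAt ρ (b (x t + ρ t) - b (x t)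
            - (2 * ‖ρ 0‖ ^ (1/2 : ℝ)) • gMap d (ρ t) - lam • ρ t) t) →
        ∀ (ς ς' ς'' : ℝ → EuclideanSpace ℝ (Fin d)),
          (∀ t ∈ Icc (0:ℝ) 1, HasDerivAt ς (ς' t) t) →
          (∀ t ∈ Icc (0:ℝ) 1, HasDerivAt ς' (ς'' t) t) →
          ContinuousOn ς'' (Icc 0 1) →
          (∀ t, 0 ≤ t →
            ‖b (x t + ρ t) - b (x t)
                - (2 * ‖ρ 0‖ ^ (1/2 : ℝ)) • gMap d (ρ t) - lam • ρ t‖ ≤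
              ((L₀ : ℝ) + lam) * ‖ρ t‖ + 2 * ‖ρ 0‖ ^ (1/2 : ℝ) * ‖ρ t‖ ^ (1/2 : ℝ)) ∧
          (∀ t ∈ Icc (0:ℝ) 1, ρ t ≠ 0 →
            ∃ φ' : EuclideanSpace ℝ (Fin d),
              HasDerivAt (fun s =>
                (2 * ‖ρ 0‖ ^ (1/2 : ℝ)) • gMap d (ρ s) + lam • ρ s + ς' s) φ' t ∧
              ‖φ'‖ ≤ C * ‖ρ 0‖ + ‖ς'' t‖) := by
  refine ⟨(3 + lam) * ((L₀ : ℝ) + lam + 2), by positivity,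
    fun b hb hmono x ρ _ _ hρ ς ς' ς'' _ hς' _ => ?_⟩
  set ϖ : ℝ := 2 * ‖ρ 0‖ ^ (1/2 : ℝ) with hϖ_def
  have hϖ : 0 ≤ ϖ := by positivity
  have hbound := fun t (_ : 0 ≤ t) => norm_drift_le hb hlam hϖ (x t) (ρ t)
  refine ⟨hbound, fun t ht hρt => ?_⟩
  set ρ' := b (x t + ρ t) - b (x t) - ϖ • gMap d (ρ t) - lam • ρ t
  have hρ't : HasDerivAt ρ ρ' t := hρ t ht.1
  have hdecay : ‖ρ t‖ ≤ ‖ρ 0‖ := norm_le_norm_of_inner_deriv_nonpos hρ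
    (fun s _ => inner_drift_self_nonpos hmono hϖ (x s) (ρ s)) ht.1
  obtain ⟨L, hL, hLnorm⟩ := exists_hasFDerivAt_rpow_norm_smul (-(1/2) : ℝ) hρt
  refine ⟨ϖ • L ρ' + lam • ρ' + ς'' t,
    (((hL.comp_hasDerivAt t hρ't).const_smul ϖ).add (hρ't.const_smul lam)).add (hς' t ht), ?_⟩
  have hLρ' : ‖L ρ'‖ ≤ 3/2 * ‖ρ t‖ ^ (-(1/2) : ℝ) * ‖ρ'‖ := by
    refine (L.le_opNorm ρ').trans (mul_le_mul_of_nonneg_right (hLnorm.trans_eq ?_) (norm_nonneg _))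
    norm_num
  have hK : (0 : ℝ) ≤ L₀ + lam := by positivity
  have hρ'_bound := le_mul_of_le_mul_add_rpow_half hK (norm_nonneg _) hdecay (hbound t ht.1)
  have hρ'_scaled := rpow_half_mul_rpow_neg_half_mul_le hK (norm_pos_iff.2 hρt) hdecay (hbound t ht.1)
  calc ‖ϖ • L ρ' + lam • ρ' + ς'' t‖ ≤ ϖ * ‖L ρ'‖ + lam * ‖ρ'‖ + ‖ς'' t‖ := by
        refine norm_add₃_le.trans_eq ?_
        rw [norm_smul, norm_smul, Real.norm_of_nonneg hϖ, Real.norm_of_nonneg hlam]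
    _ ≤ ϖ * (3/2 * ‖ρ t‖ ^ (-(1/2) : ℝ) * ‖ρ'‖) + lam * ((L₀ + lam + 2) * ‖ρ 0‖) + ‖ς'' t‖ := by
        gcongr
    _ = 3 * (‖ρ 0‖ ^ (1/2 : ℝ) * (‖ρ t‖ ^ (-(1/2) : ℝ) * ‖ρ'‖))
          + lam * ((L₀ + lam + 2) * ‖ρ 0‖) + ‖ς'' t‖ := by
        rw [hϖ_def]; ring
    _ ≤ 3 * ((L₀ + lam + 2) * ‖ρ 0‖) + lam * ((L₀ + lam + 2) * ‖ρ 0‖) + ‖ς'' t‖ := by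
        gcongr
    _ = (3 + lam) * ((L₀ : ℝ) + lam + 2) * ‖ρ 0‖ + ‖ς'' t‖ := by ring
end

section
/- Let H ∈ (0,1), ε ∈ (0, 2 − 2H), α ∈ (max(0, 1/2 − H), 1] and 𝔠 ≥ 0, and let w : (−∞, 0] → ℝ^d be continuous with w(0) = 0, |w(s)| ≤ 𝔠 (1 ∨ |s|)^{(1+ε)/2} for all s ≤ 0, and |w(s)| ≤ 𝔠 |s|^α for s ∈ [−1, 0]. Then for every t > 0 the integral F(t) = ∫_{−∞}^0 ((t − s)^{H−3/2} − (−s)^{H−3/2}) w(s) ds converges absolutely, and F is differentiable on (0, ∞) with F'(t) = (H − 3/2) ∫_{−∞}^0 (t − s)^{H−5/2} w(s) ds. -/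
/-!
Write `K_τ(s) = (τ - s)^p - (-s)^p` with `p = H - 3/2`. For `s ≤ -1` the mean value theorem
gives `|K_τ(s)| ≤ |p| τ (-s)^(p-1)`, which against the growth bound `(-s)^((1+ε)/2)` is
integrable since `p - 1 + (1+ε)/2 < -1`; on `(-1, 0)` simply `|K_τ(s)| ≤ (-s)^p`, integrable
against the Hölder bound `(-s)^α` since `p + α > -1`. The `τ`-derivative `p (τ - s)^(p-1) w(s)`
decreases in `τ`, so for `τ > t/2` it is dominated by its value at `t/2`, which is integrable
by the same growth estimate; hence one may differentiate under the integral sign.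
-/

open Set MeasureTheory

lemma integrableOn_Iic_neg_rpow {β : ℝ} (hβ : β < -1) :
    IntegrableOn (fun s : ℝ => (-s) ^ β) (Iic (-1)) := by
  have h : IntegrableOn (fun x : ℝ => x ^ β) (Ici 1) := by
    rw [integrableOn_Ici_iff_integrableOn_Ioi]
    exact integrableOn_Ioi_rpow_of_lt hβ one_pos
  exact IntegrableOn.comp_neg_Iic (μ := volume) (c := -1) (f := (· ^ β)) (by rwa [neg_neg])

lemma integrableOn_Ioo_neg_rpow {β : ℝ} (hβ : -1 < β) :
    IntegrableOn (fun s : ℝ => (-s) ^ β) (Ioo (-1) 0) := by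
  simpa using ((intervalIntegral.integrableOn_Ioo_rpow_iff one_pos).2 hβ).comp_neg

lemma abs_rpow_add_sub_rpow_le {a h p : ℝ} (ha : 0 < a) (hh : 0 ≤ h) (hp : p ≤ 1) :
    |(a + h) ^ p - a ^ p| ≤ |p| * a ^ (p - 1) * h := by
  have hderiv : ∀ x ∈ Icc a (a + h),
      HasDerivWithinAt (· ^ p) (p * x ^ (p - 1)) (Icc a (a + h)) x :=
    fun x hx => (Real.hasDerivAt_rpow_const (Or.inl (ha.trans_le hx.1).ne')).hasDerivWithinAt
  have hbound : ∀ x ∈ Icc a (a + h), ‖p * x ^ (p - 1)‖ ≤ |p| * a ^ (p - 1) := fun x hx => by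
    rw [norm_mul, Real.norm_eq_abs, Real.norm_eq_abs,
      abs_of_nonneg (Real.rpow_nonneg (ha.le.trans hx.1) _)]
    exact mul_le_mul_of_nonneg_left (Real.rpow_le_rpow_of_nonpos ha hx.1 (by linarith))
      (abs_nonneg p)
  have := (convex_Icc a (a + h)).norm_image_sub_le_of_norm_hasDerivWithin_le hderiv hbound
    (left_mem_Icc.2 (by linarith)) (right_mem_Icc.2 (by linarith))
  simpa [Real.norm_eq_abs, abs_of_nonneg hh] using this

lemma abs_rpow_add_sub_rpow_le_rpow {a h p : ℝ} (ha : 0 < a) (hh : 0 ≤ h) (hp : p ≤ 0) :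
    |(a + h) ^ p - a ^ p| ≤ a ^ p :=
  abs_sub_le_of_nonneg_of_le (Real.rpow_nonneg (by linarith) _)
    (Real.rpow_le_rpow_of_nonpos ha (by linarith) hp) (Real.rpow_nonneg ha.le _) le_rfl

lemma ContinuousOn.integrableOn_of_norm_le {α E : Type*} [TopologicalSpace α] [MeasurableSpace α]
    [OpensMeasurableSpace α] [NormedAddCommGroup E] [SecondCountableTopologyEither α E]
    {μ : Measure α} {f : α → E} {g : α → ℝ} {s : Set α} (hf : ContinuousOn f s)
    (hs : MeasurableSet s) (hg : IntegrableOn g s μ)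
    (hfg : ∀ x ∈ s, ‖f x‖ ≤ g x) : IntegrableOn f s μ :=
  hg.mono' (hf.aestronglyMeasurable hs) ((ae_restrict_mem hs).mono hfg)

lemma continuousOn_sub_rpow {τ q : ℝ} (hτ : 0 ≤ τ) :
    ContinuousOn (fun s : ℝ => (τ - s) ^ q) (Iio 0) :=
  (continuousOn_const.sub continuousOn_id).rpow_const fun _ hs =>
    Or.inl (sub_pos.2 (lt_of_lt_of_le hs hτ)).ne'

section PastIntegrals

variable {E : Type*} [NormedAddCommGroup E] [NormedSpace ℝ E] {w : ℝ → E} {c γ α : ℝ}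

lemma integrableOn_Iio_sub_rpow_smul {q τ : ℝ} (hq : q ≤ 0) (hqγ : q + γ < -1)
    (hw : ContinuousOn w (Iic 0)) (hgrowth : ∀ s ≤ -1, ‖w s‖ ≤ c * (-s) ^ γ) (hτ : 0 < τ) :
    IntegrableOn (fun s => (τ - s) ^ q • w s) (Iio 0) := by
  have hcont : ContinuousOn (fun s => (τ - s) ^ q • w s) (Iic 0) :=
    ((continuousOn_const.sub continuousOn_id).rpow_const fun s hs =>
      Or.inl (sub_pos.2 (lt_of_le_of_lt hs hτ)).ne').smul hw
  rw [← Iic_union_Ioo_eq_Iio (by norm_num : (-1 : ℝ) < 0)]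
  refine IntegrableOn.union ?_ ?_
  · refine (hcont.mono (Iic_subset_Iic.2 (by norm_num))).integrableOn_of_norm_le
      measurableSet_Iic ((integrableOn_Iic_neg_rpow hqγ).const_mul c) fun s (hs : s ≤ -1) => ?_
    have hs0 : 0 < -s := by linarith
    calc ‖(τ - s) ^ q • w s‖ = (τ - s) ^ q * ‖w s‖ := by
          rw [norm_smul, Real.norm_of_nonneg (Real.rpow_nonneg (by linarith) _)]
      _ ≤ (-s) ^ q * (c * (-s) ^ γ) :=
          mul_le_mul (Real.rpow_le_rpow_of_nonpos hs0 (by linarith) hq) (hgrowth s hs)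
            (norm_nonneg _) (Real.rpow_nonneg hs0.le _)
      _ = c * (-s) ^ (q + γ) := by rw [Real.rpow_add hs0]; ring
  · exact (hcont.mono Icc_subset_Iic_self).integrableOn_Icc.mono_set Ioo_subset_Icc_self

lemma integrableOn_Iio_rpow_sub_rpow_smul {p t : ℝ} (hp : p ≤ 0) (hpγ : p + γ < 0)
    (hpα : -1 < p + α) (hw : ContinuousOn w (Iio 0)) (hgrowth : ∀ s ≤ -1, ‖w s‖ ≤ c * (-s) ^ γ)
    (hhold : ∀ s ∈ Ioo (-1) 0, ‖w s‖ ≤ c * (-s) ^ α) (ht : 0 ≤ t) :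
    IntegrableOn (fun s => ((t - s) ^ p - (-s) ^ p) • w s) (Iio 0) := by
  have hcont : ContinuousOn (fun s => ((t - s) ^ p - (-s) ^ p) • w s) (Iio 0) :=
    ((continuousOn_sub_rpow ht).sub
      (by simpa using continuousOn_sub_rpow (q := p) le_rfl)).smul hw
  have hnorm (s : ℝ) :
      ‖((t - s) ^ p - (-s) ^ p) • w s‖ = |(-s + t) ^ p - (-s) ^ p| * ‖w s‖ := by
    rw [norm_smul, Real.norm_eq_abs, neg_add_eq_sub]
  rw [← Iic_union_Ioo_eq_Iio (by norm_num : (-1 : ℝ) < 0)]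
  refine IntegrableOn.union ?_ ?_
  · refine (hcont.mono (Iic_subset_Iio.2 (by norm_num))).integrableOn_of_norm_le
      measurableSet_Iic
      ((integrableOn_Iic_neg_rpow (β := p - 1 + γ) (by linarith)).const_mul (|p| * t * c))
      fun s (hs : s ≤ -1) => ?_
    have hs0 : 0 < -s := by linarith
    calc ‖((t - s) ^ p - (-s) ^ p) • w s‖ = |(-s + t) ^ p - (-s) ^ p| * ‖w s‖ := hnorm s
      _ ≤ |p| * (-s) ^ (p - 1) * t * (c * (-s) ^ γ) :=
          mul_le_mul (abs_rpow_add_sub_rpow_le hs0 ht (by linarith)) (hgrowth s hs)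
            (norm_nonneg _) (by positivity)
      _ = |p| * t * c * (-s) ^ (p - 1 + γ) := by rw [Real.rpow_add hs0]; ring
  · refine (hcont.mono Ioo_subset_Iio_self).integrableOn_of_norm_le measurableSet_Ioo
      ((integrableOn_Ioo_neg_rpow hpα).const_mul c) fun s hs => ?_
    have hs0 : 0 < -s := by linarith [hs.2]
    calc ‖((t - s) ^ p - (-s) ^ p) • w s‖ = |(-s + t) ^ p - (-s) ^ p| * ‖w s‖ := hnorm s
      _ ≤ (-s) ^ p * (c * (-s) ^ α) :=
          mul_le_mul (abs_rpow_add_sub_rpow_le_rpow hs0 ht hp) (hhold s hs) (norm_nonneg _)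
            (Real.rpow_nonneg hs0.le _)
      _ = c * (-s) ^ (p + α) := by rw [Real.rpow_add hs0]; ring

lemma hasDerivAt_integral_rpow_sub_rpow_smul {p t : ℝ} (hp : p ≤ 0) (hpγ : p + γ < 0)
    (hpα : -1 < p + α) (hw : ContinuousOn w (Iic 0)) (hgrowth : ∀ s ≤ -1, ‖w s‖ ≤ c * (-s) ^ γ)
    (hhold : ∀ s ∈ Ioo (-1) 0, ‖w s‖ ≤ c * (-s) ^ α) (ht : 0 < t) :
    HasDerivAt (fun τ => ∫ s in Iio 0, ((τ - s) ^ p - (-s) ^ p) • w s)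
      (p • ∫ s in Iio 0, (t - s) ^ (p - 1) • w s) t := by
  have hF (τ : ℝ) (hτ : 0 ≤ τ) :=
    integrableOn_Iio_rpow_sub_rpow_smul hp hpγ hpα (hw.mono Iio_subset_Iic_self) hgrowth hhold hτ
  have hF' (τ : ℝ) (hτ : 0 < τ) :=
    integrableOn_Iio_sub_rpow_smul (q := p - 1) (by linarith) (by linarith) hw hgrowth hτ
  have h_bound : ∀ᵐ s ∂volume.restrict (Iio 0), ∀ τ ∈ Ioi (t / 2),
      ‖p • (τ - s) ^ (p - 1) • w s‖ ≤ |p| * ‖(t / 2 - s) ^ (p - 1) • w s‖ := by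
    filter_upwards [ae_restrict_mem measurableSet_Iio] with s (hs : s < 0) τ (hτ : t / 2 < τ)
    have hts : 0 < t / 2 - s := by linarith
    rw [norm_smul, norm_smul, norm_smul, Real.norm_eq_abs,
      Real.norm_of_nonneg (Real.rpow_nonneg (by linarith) _),
      Real.norm_of_nonneg (Real.rpow_nonneg hts.le _)]
    have hmono : (τ - s) ^ (p - 1) ≤ (t / 2 - s) ^ (p - 1) :=
      Real.rpow_le_rpow_of_nonpos hts (by linarith) (by linarith)
    gcongr
  have h_diff : ∀ᵐ s ∂volume.restrict (Iio 0), ∀ τ ∈ Ioi (t / 2),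
      HasDerivAt (fun τ => ((τ - s) ^ p - (-s) ^ p) • w s) (p • (τ - s) ^ (p - 1) • w s) τ := by
    filter_upwards [ae_restrict_mem measurableSet_Iio] with s (hs : s < 0) τ (hτ : t / 2 < τ)
    have hτs : τ - s ≠ 0 := by linarith
    have := ((((hasDerivAt_id τ).sub_const s).rpow_const (p := p) (Or.inl hτs)).sub_const
      ((-s) ^ p)).smul_const (w s)
    simpa [mul_smul] using this
  have key := hasDerivAt_integral_of_dominated_loc_of_deriv_le (Ioi_mem_nhds (half_lt_self ht))
    (Filter.eventually_of_mem (Ioi_mem_nhds ht) fun τ hτ =>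
      (hF τ (le_of_lt hτ)).aestronglyMeasurable)
    (hF t ht.le) ((hF' t ht).aestronglyMeasurable.const_smul p) h_bound
    ((hF' (t / 2) (half_pos ht)).norm.const_mul |p|) h_diff
  simpa only [integral_smul] using key.2

end PastIntegrals

theorem stmt_10_general (d : ℕ) (H ε α c₀ : ℝ)
    (hε : ε ∈ Ioo (0:ℝ) (2 - 2 * H)) (hα : α ∈ Ioc (max 0 (1/2 - H)) 1)
    (w : ℝ → EuclideanSpace ℝ (Fin d)) (hw : ContinuousOn w (Iic 0))
    (hgrowth : ∀ s : ℝ, s ≤ 0 → ‖w s‖ ≤ c₀ * (max 1 |s|) ^ ((1 + ε) / 2))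
    (hhold : ∀ s ∈ Icc (-1:ℝ) 0, ‖w s‖ ≤ c₀ * |s| ^ α) :
    ∀ t : ℝ, 0 < t →
      IntegrableOn
        (fun s => ((t - s) ^ (H - 3/2) - (-s) ^ (H - 3/2)) • w s) (Iic 0) ∧
      HasDerivAt
        (fun τ => ∫ s in Iic (0:ℝ), ((τ - s) ^ (H - 3/2) - (-s) ^ (H - 3/2)) • w s)
        ((H - 3/2) • ∫ s in Iic (0:ℝ), (t - s) ^ (H - 5/2) • w s) t := by
  intro t ht
  have hp : H - 3/2 ≤ 0 := by linarith [hε.1, hε.2]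
  have hpγ : H - 3/2 + (1 + ε) / 2 < 0 := by linarith [hε.2]
  have hpα : -1 < H - 3/2 + α := by linarith [le_max_right 0 (1/2 - H), hα.1]
  have hgrowth' (s : ℝ) (hs : s ≤ -1) : ‖w s‖ ≤ c₀ * (-s) ^ ((1 + ε) / 2) := by
    simpa [abs_of_neg (by linarith : s < 0), max_eq_right (by linarith : 1 ≤ -s)]
      using hgrowth s (by linarith)
  have hhold' (s : ℝ) (hs : s ∈ Ioo (-1) 0) : ‖w s‖ ≤ c₀ * (-s) ^ α := by
    simpa [abs_of_neg hs.2] using hhold s (Ioo_subset_Icc_self hs)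
  constructor
  · rw [integrableOn_Iic_iff_integrableOn_Iio]
    exact integrableOn_Iio_rpow_sub_rpow_smul hp hpγ hpα (hw.mono Iio_subset_Iic_self)
      hgrowth' hhold' ht.le
  · simp only [integral_Iic_eq_integral_Iio, show H - 5/2 = H - 3/2 - 1 by ring]
    exact hasDerivAt_integral_rpow_sub_rpow_smul hp hpγ hpα hw hgrowth' hhold' ht

/-- Differentiation under the integral for the past-dependent drift: under
growth at `-∞` and a Hölder bound near `0`, the integral
`F(t) = ∫_{-∞}^0 ((t-s)^{H-3/2} - (-s)^{H-3/2}) w(s) ds` converges absolutely and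
`F'(t) = (H-3/2) ∫_{-∞}^0 (t-s)^{H-5/2} w(s) ds` for `t > 0`. -/
theorem stmt_10 (d : ℕ) (H ε α c₀ : ℝ) (hH : H ∈ Ioo (0:ℝ) 1)
    (hε : ε ∈ Ioo (0:ℝ) (2 - 2 * H)) (hα : α ∈ Ioc (max 0 (1/2 - H)) 1) (hc : 0 ≤ c₀)
    (w : ℝ → EuclideanSpace ℝ (Fin d)) (hw : ContinuousOn w (Iic 0)) (hw0 : w 0 = 0)
    (hgrowth : ∀ s : ℝ, s ≤ 0 → ‖w s‖ ≤ c₀ * (max 1 |s|) ^ ((1 + ε) / 2))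
    (hhold : ∀ s ∈ Icc (-1:ℝ) 0, ‖w s‖ ≤ c₀ * |s| ^ α) :
    ∀ t : ℝ, 0 < t →
      IntegrableOn
        (fun s => ((t - s) ^ (H - 3/2) - (-s) ^ (H - 3/2)) • w s) (Iic 0) ∧
      HasDerivAt
        (fun τ => ∫ s in Iic (0:ℝ), ((τ - s) ^ (H - 3/2) - (-s) ^ (H - 3/2)) • w s)
        ((H - 3/2) • ∫ s in Iic (0:ℝ), (t - s) ^ (H - 5/2) • w s) t :=
  stmt_10_general d H ε α c₀ hε hα w hw hgrowth hhold
end
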